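/- Let (A,≺,≻,α) be a Hom-Leibniz dendriform algebra over a field K. Then the bilinear operation [x,y] = x≺y + x≻y makes (A,[·,·],α) a Hom-Leibniz algebra, i.e. [α(x),[y,z]] = [[x,y],α(z)] + [α(y),[x,z]] for all x,y,z ∈ A. -/
import Mathlib


/-- A Hom-Leibniz algebra structure. -/
def HomLeibniz {K A : Type*} [Field K] [AddCommGroup A] [Module K A]
    (br : A →ₗ[K] A →ₗ[K] A) (α : A →ₗ[K] A) : Prop :=
  ∀ x y z : A, br (α x) (br y z) = br (br x y) (α z) + br (α y) (br x z)

/-- A Hom-Leibniz dendriform algebra `(A, ≺, ≻, α)`, with `p = ≺` and `s = ≻`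
and `[x,y] = x≺y + x≻y`. -/
def HomLeibnizDendriform {K A : Type*} [Field K] [AddCommGroup A] [Module K A]
    (p s : A →ₗ[K] A →ₗ[K] A) (α : A →ₗ[K] A) : Prop :=
  (∀ x y z : A, s (p x y + s x y) (α z) = s (α x) (s y z) - s (α y) (s x z)) ∧
  (∀ x y z : A, s (α x) (p y z) = p (s x y) (α z) + p (α y) (p x z + s x z)) ∧
  (∀ x y z : A, p (α x) (p y z + s y z) = p (p x y) (α z) + s (α y) (p x z))

/-- the operation `[x,y] = x≺y + x≻y` of a Hom-Leibniz dendriform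
algebra defines a Hom-Leibniz algebra. -/
theorem homLeibniz_of_homLeibnizDendriform
    {K A : Type*} [Field K] [AddCommGroup A] [Module K A]
    (p s : A →ₗ[K] A →ₗ[K] A) (α : A →ₗ[K] A)
    (h : HomLeibnizDendriform p s α) :
    HomLeibniz (p + s) α := by
  obtain ⟨h1, h2, h3⟩ := h
  intro x y z
  have e1 := h1 x y z
  have e2 := h2 x y z
  have e3 := h3 x y z
  simp only [LinearMap.add_apply, map_add] at *
  linear_combination (norm := abel) e2 + e3 - e1
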